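/- Let (V,C,u) be an order unit space with a smooth cone, η ∈ ∂C ∖ {0}, and φ the state with φ(η) = 0. Suppose z ∈ C with φ(z) > 0, and for 0 < s ≤ 1 set y_s = (1−s)η + su and z_s = (1−s)z + su (both in C°). Then lim_{s→0⁺} M(z_s/y_s) · M(u/y_s)⁻¹ = φ(z). -/

import Mathlib

open Set Filter Topology

variable {V : Type*} [NormedAddCommGroup V] [NormedSpace ℝ V]

/-- `(V, C, u)` is an order unit space whose norm is the order unit norm of `(C, u)`:
`C` is an Archimedean cone and `u` is an order unit of it. -/
structure IsOrderUnitSpace (C : Set V) (u : V) : Prop where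
  convex : Convex ℝ C
  smul_mem : ∀ l : ℝ, 0 ≤ l → ∀ x ∈ C, l • x ∈ C
  salient : C ∩ (-C) = {0}
  archimedean : ∀ x : V, ∀ y ∈ C, (∀ n : ℕ, 0 < n → y - (n : ℝ) • x ∈ C) → -x ∈ C
  unit_mem : u ∈ C
  order_unit : ∀ x : V, ∃ l : ℝ, 0 ≤ l ∧ l • u - x ∈ C
  norm_eq : ∀ x : V, ‖x‖ = sInf {l : ℝ | 0 < l ∧ x + l • u ∈ C ∧ l • u - x ∈ C}

/-- `M(x/y) = inf {β > 0 : x ≤_C β y}`. -/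
noncomputable def Mratio (C : Set V) (x y : V) : ℝ :=
  sInf {b : ℝ | 0 < b ∧ b • y - x ∈ C}

/-- The cone `C` is strictly convex: the open segment between any two linearly
independent boundary points lies in the interior. -/
def StrictlyConvexCone (C : Set V) : Prop :=
  ∀ x ∈ frontier C, ∀ y ∈ frontier C, LinearIndependent ℝ ![x, y] →
    openSegment ℝ x y ⊆ interior C

/-- `g` is antihomogeneous on the interior of `C`: `g (λ x) = λ⁻¹ g x`. -/
def IsAntihomogeneous (C : Set V) (g : V → V) : Prop :=
  ∀ l : ℝ, 0 < l → ∀ x ∈ interior C, g (l • x) = l⁻¹ • g x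

/-- `g` is an order-antimorphism of the interior of `C`: `x ≤_C y ↔ g y ≤_C g x`. -/
def IsOrderAntimorphism (C : Set V) (g : V → V) : Prop :=
  ∀ x ∈ interior C, ∀ y ∈ interior C, (y - x ∈ C ↔ g x - g y ∈ C)

/-- A state of `(V, C, u)`: a positive linear functional with `φ u = 1`. -/
def IsState (C : Set V) (u : V) (φ : V →ₗ[ℝ] ℝ) : Prop :=
  (∀ x ∈ C, 0 ≤ φ x) ∧ φ u = 1

/-- The cone `C` is smooth: every nonzero boundary point has a unique supporting
state. -/
def SmoothCone (C : Set V) (u : V) : Prop :=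
  ∀ η ∈ frontier C, η ≠ 0 → ∃! φ : V →ₗ[ℝ] ℝ, IsState C u φ ∧ φ η = 0


/-! Since `φ η = 0` we have `φ y_s = s`, so positivity of `φ` gives
`s M(z_s/y_s) ≥ φ z_s = (1 - s) φ z + s`; for `z = u` this is matched from above, so `M(u/y_s) = 1/s`.
For the upper bound fix `c > φ z`. If no `t η + c u - z` lay in `C`, Hahn–Banach would separate the
ray `{t η + c u - z : t ≥ 0}` from `C` by a state `ψ`; then `ψ η = 0`, so `ψ = φ` by smoothness,
although `φ (c u - z) > 0`. Hence `z ≤ t η + c u` for some `t`, which gives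
`s M(z_s/y_s) ≤ max (s t) ((1 - s) c + s) → c` as `s → 0⁺`. -/

section Mratio

variable {C : Set V} {x y : V} {b : ℝ}

lemma Mratio_le (hb : 0 < b) (hbxy : b • y - x ∈ C) : Mratio C x y ≤ b :=
  csInf_le ⟨0, fun _ hc => hc.1.le⟩ ⟨hb, hbxy⟩

lemma div_le_Mratio {φ : V →ₗ[ℝ] ℝ} (hφ : ∀ a ∈ C, 0 ≤ φ a) (hy : 0 < φ y) (hb : 0 < b)
    (hbxy : b • y - x ∈ C) : φ x / φ y ≤ Mratio C x y := by
  refine le_csInf ⟨b, hb, hbxy⟩ fun c ⟨_, hc⟩ => ?_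
  have := hφ _ hc
  rw [map_sub, map_smul, smul_eq_mul] at this
  rw [div_le_iff₀ hy]
  linarith

end Mratio

lemma max_segment_pos {t c s : ℝ} (hc : 0 ≤ c) (hs : 0 < s) (hs1 : s ≤ 1) :
    0 < max t (((1 - s) * c + s) / s) :=
  lt_max_of_lt_right (div_pos (add_pos_of_nonneg_of_pos (mul_nonneg (sub_nonneg.2 hs1) hc) hs) hs)

namespace IsOrderUnitSpace

variable {C : Set V} {u : V}

lemma zero_mem (h : IsOrderUnitSpace C u) : (0 : V) ∈ C := by
  simpa using h.smul_mem 0 le_rfl u h.unit_mem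

lemma add_mem (h : IsOrderUnitSpace C u) {a b : V} (ha : a ∈ C) (hb : b ∈ C) : a + b ∈ C := by
  have := h.smul_mem 2 zero_le_two _ (h.convex ha hb (by norm_num : (0 : ℝ) ≤ 1 / 2)
    (by norm_num : (0 : ℝ) ≤ 1 / 2) (by norm_num))
  simpa [smul_add, smul_smul] using this

lemma add_smul_mem_of_norm_lt (h : IsOrderUnitSpace C u) {x : V} {l : ℝ} (hl : ‖x‖ < l) :
    x + l • u ∈ C := by
  rcases eq_empty_or_nonempty {l : ℝ | 0 < l ∧ x + l • u ∈ C ∧ l • u - x ∈ C} with hS | hS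
  · have hx : x = 0 := norm_eq_zero.1 (by rw [h.norm_eq, hS, Real.sInf_empty])
    subst hx
    simpa using h.smul_mem l ((norm_nonneg _).trans_lt hl).le u h.unit_mem
  · obtain ⟨l', ⟨-, hl'C, -⟩, hl'l⟩ := exists_lt_of_csInf_lt hS (h.norm_eq x ▸ hl)
    convert h.add_mem hl'C (h.smul_mem (l - l') (sub_nonneg.2 hl'l.le) u h.unit_mem) using 1
    module

lemma isClosed (h : IsOrderUnitSpace C u) : IsClosed C := by
  refine isClosed_of_closure_subset fun x hx => ?_
  have hxε : ∀ ε : ℝ, 0 < ε → x + ε • u ∈ C := by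
    intro ε hε
    obtain ⟨x', hx', hd⟩ := Metric.mem_closure_iff.1 hx ε hε
    rw [dist_eq_norm] at hd
    convert h.add_mem hx' (h.add_smul_mem_of_norm_lt hd) using 1
    abel
  have harch : ∀ n : ℕ, 0 < n → u - (n : ℝ) • (-x) ∈ C := by
    intro n hn
    have hn' : (0 : ℝ) < n := Nat.cast_pos.2 hn
    convert h.smul_mem n hn'.le _ (hxε (n : ℝ)⁻¹ (inv_pos.2 hn')) using 1
    rw [smul_add, smul_smul, mul_inv_cancel₀ hn'.ne', one_smul, smul_neg, sub_neg_eq_add, add_comm]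
  simpa using h.archimedean (-x) u h.unit_mem harch

lemma unit_mem_interior (h : IsOrderUnitSpace C u) : u ∈ interior C := by
  refine mem_interior_iff_mem_nhds.2 (mem_of_superset (Metric.ball_mem_nhds u one_pos) fun x hx => ?_)
  rw [Metric.mem_ball, dist_eq_norm] at hx
  simpa using h.add_smul_mem_of_norm_lt hx

lemma apply_nonpos_of_le (h : IsOrderUnitSpace C u) {f : V →ₗ[ℝ] ℝ} {c : ℝ}
    (hf : ∀ a ∈ C, f a ≤ c) {a : V} (ha : a ∈ C) : f a ≤ 0 := by
  by_contra! hfa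
  obtain ⟨n, hn⟩ := exists_nat_gt (c / f a)
  have := hf _ (h.smul_mem n n.cast_nonneg a ha)
  rw [map_smul, smul_eq_mul, ← le_div_iff₀ hfa] at this
  linarith

lemma apply_unit_pos (h : IsOrderUnitSpace C u) {f : StrongDual ℝ V} (hf : f ≠ 0)
    (hfC : ∀ a ∈ C, 0 ≤ f a) : 0 < f u := by
  have hmaps : f '' interior C ⊆ interior (Ici 0) :=
    interior_maximal ((image_mono interior_subset).trans (image_subset_iff.2 hfC))
      (f.isOpenMap_of_ne_zero hf _ isOpen_interior)
  rw [interior_Ici] at hmaps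
  exact hmaps (mem_image_of_mem f h.unit_mem_interior)

lemma exists_state_nonpos_of_disjoint (h : IsOrderUnitSpace C u) {R : Set V} (hR : Convex ℝ R)
    (hRne : R.Nonempty) (hCR : Disjoint C R) :
    ∃ ψ : V →ₗ[ℝ] ℝ, IsState C u ψ ∧ ∀ x ∈ R, ψ x ≤ 0 := by
  obtain ⟨f, c, hf0, hfC, hfR⟩ := geometric_hahn_banach_of_nonempty_interior h.convex hR
    (hCR.mono_left interior_subset) ⟨u, h.unit_mem_interior⟩ hRne
  have hc : 0 ≤ c := by simpa using hfC 0 h.zero_mem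
  have hgC : ∀ a ∈ C, 0 ≤ (-f) a := fun a ha =>
    neg_nonneg.2 (h.apply_nonpos_of_le (f := f.toLinearMap) hfC ha)
  have hgu := h.apply_unit_pos (neg_ne_zero.2 hf0) hgC
  refine ⟨((-f) u)⁻¹ • (-f).toLinearMap, ⟨fun a ha => ?_, ?_⟩, fun x hx => ?_⟩
  · exact mul_nonneg (inv_nonneg.2 hgu.le) (hgC a ha)
  · exact inv_mul_cancel₀ hgu.ne'
  · exact mul_nonpos_of_nonneg_of_nonpos (inv_nonneg.2 hgu.le) (by simpa using hc.trans (hfR x hx))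

lemma exists_smul_add_mem_of_apply_pos (h : IsOrderUnitSpace C u) (hsm : SmoothCone C u) {η : V}
    (hη : η ∈ frontier C) (hη0 : η ≠ 0) {φ : V →ₗ[ℝ] ℝ} (hφ : IsState C u φ) (hφη : φ η = 0)
    {w : V} (hw : 0 < φ w) : ∃ t : ℝ, t • η + w ∈ C := by
  by_contra! hray
  let ray : ℝ →ᵃ[ℝ] V := AffineMap.lineMap w (w + η)
  have hray_apply : ∀ t, ray t = t • η + w := fun t => by
    simp [ray, AffineMap.lineMap_apply]
  obtain ⟨ψ, hψ, hψray⟩ := h.exists_state_nonpos_of_disjoint ((convex_Ici 0).affine_image ray)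
    ⟨ray 0, mem_image_of_mem _ self_mem_Ici⟩
    (disjoint_right.2 fun _ ⟨t, _, hx⟩ => hx ▸ hray_apply t ▸ hray t)
  have hψray' : ∀ t ≥ 0, t * ψ η + ψ w ≤ 0 := fun t ht => by
    simpa [hray_apply] using hψray _ (mem_image_of_mem ray (mem_Ici.2 ht))
  have hψw : ψ w ≤ 0 := by simpa using hψray' 0 le_rfl
  have hψη : ψ η = 0 := by
    refine le_antisymm (not_lt.1 fun hpos => ?_) (hψ.1 η (h.isClosed.frontier_subset hη))
    have := hψray' ((1 - ψ w) / ψ η) (div_nonneg (by linarith) hpos.le)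
    rw [div_mul_cancel₀ _ hpos.ne'] at this
    linarith
  obtain rfl := (hsm η hη hη0).unique ⟨hφ, hφη⟩ ⟨hψ, hψη⟩
  linarith

lemma max_smul_segment_sub_segment_mem (h : IsOrderUnitSpace C u) {η z : V} (hη : η ∈ C)
    {t c s : ℝ} (hz : t • η + c • u - z ∈ C) (hs : 0 < s) (hs1 : s ≤ 1) :
    max t (((1 - s) * c + s) / s) • ((1 - s) • η + s • u) - ((1 - s) • z + s • u) ∈ C := by
  set b := max t (((1 - s) * c + s) / s)
  have hbt : t ≤ b := le_max_left _ _
  have hbs : (1 - s) * c + s ≤ b * s := (div_le_iff₀ hs).1 (le_max_right _ _)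
  have e : b • ((1 - s) • η + s • u) - ((1 - s) • z + s • u) =
      (1 - s) • (t • η + c • u - z) + ((1 - s) * (b - t)) • η + (b * s - ((1 - s) * c + s)) • u := by
    module
  rw [e]
  refine h.add_mem (h.add_mem (h.smul_mem _ (by linarith) _ hz) (h.smul_mem _ ?_ _ hη))
    (h.smul_mem _ (by linarith) _ h.unit_mem)
  exact mul_nonneg (by linarith) (by linarith)

lemma mul_Mratio_segment_le (h : IsOrderUnitSpace C u) {η z : V} (hη : η ∈ C) {t c s : ℝ}
    (hc : 0 ≤ c) (hz : t • η + c • u - z ∈ C) (hs : 0 < s) (hs1 : s ≤ 1) :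
    s * Mratio C ((1 - s) • z + s • u) ((1 - s) • η + s • u) ≤ max (s * t) ((1 - s) * c + s) :=
  calc s * Mratio C ((1 - s) • z + s • u) ((1 - s) • η + s • u)
      ≤ s * max t (((1 - s) * c + s) / s) := mul_le_mul_of_nonneg_left
        (Mratio_le (max_segment_pos hc hs hs1) (h.max_smul_segment_sub_segment_mem hη hz hs hs1))
        hs.le
    _ = max (s * t) ((1 - s) * c + s) := by
        rw [mul_max_of_nonneg _ _ hs.le, mul_div_cancel₀ _ hs.ne']

lemma le_mul_Mratio_segment (h : IsOrderUnitSpace C u) {η : V} (hη : η ∈ C) {φ : V →ₗ[ℝ] ℝ}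
    (hφ : IsState C u φ) (hφη : φ η = 0) (z : V) {s : ℝ} (hs : 0 < s) (hs1 : s ≤ 1) :
    (1 - s) * φ z + s ≤ s * Mratio C ((1 - s) • z + s • u) ((1 - s) • η + s • u) := by
  obtain ⟨c, hc, hcz⟩ := h.order_unit z
  have hφy : φ ((1 - s) • η + s • u) = s := by simp [hφη, hφ.2]
  have := div_le_Mratio hφ.1 (hφy.symm ▸ hs) (max_segment_pos hc hs hs1)
    (h.max_smul_segment_sub_segment_mem hη (t := 0) (by simpa using hcz) hs hs1)
  rw [hφy, div_le_iff₀ hs] at this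
  simpa [hφ.2, mul_comm] using this

lemma mul_Mratio_unit_segment (h : IsOrderUnitSpace C u) {η : V} (hη : η ∈ C) {φ : V →ₗ[ℝ] ℝ}
    (hφ : IsState C u φ) (hφη : φ η = 0) {s : ℝ} (hs : 0 < s) (hs1 : s ≤ 1) :
    s * Mratio C u ((1 - s) • η + s • u) = 1 := by
  have hupper := h.mul_Mratio_segment_le hη zero_le_one (z := u) (t := 0)
    (by simpa using h.zero_mem) hs hs1
  have hlower := h.le_mul_Mratio_segment hη hφ hφη u hs hs1
  rw [← add_smul, sub_add_cancel, one_smul] at hupper hlower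
  simp only [mul_zero, mul_one, sub_add_cancel, zero_le_one, max_eq_right] at hupper
  rw [hφ.2, mul_one, sub_add_cancel] at hlower
  exact le_antisymm hupper hlower

end IsOrderUnitSpace

theorem Mratio_quotient_tendsto_state_general
    (C : Set V) (u : V) (hous : IsOrderUnitSpace C u) (hsm : SmoothCone C u)
    (η : V) (hη : η ∈ frontier C) (hη0 : η ≠ 0)
    (φ : V →ₗ[ℝ] ℝ) (hφ : IsState C u φ) (hφη : φ η = 0)
    (z : V) (hφz : 0 < φ z) :
    Tendsto (fun s : ℝ =>
        Mratio C ((1 - s) • z + s • u) ((1 - s) • η + s • u) *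
          (Mratio C u ((1 - s) • η + s • u))⁻¹)
      (𝓝[>] (0:ℝ)) (𝓝 (φ z)) := by
  have hηC : η ∈ C := hous.isClosed.frontier_subset hη
  have hIoc : ∀ᶠ s in 𝓝[>] (0 : ℝ), s ∈ Ioc 0 1 := Ioc_mem_nhdsGT one_pos
  have hcongr : (fun s : ℝ => s * Mratio C ((1 - s) • z + s • u) ((1 - s) • η + s • u)) =ᶠ[𝓝[>] 0]
      fun s => Mratio C ((1 - s) • z + s • u) ((1 - s) • η + s • u) *
        (Mratio C u ((1 - s) • η + s • u))⁻¹ := hIoc.mono fun s ⟨hs, hs1⟩ => by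
    dsimp only
    rw [inv_eq_of_mul_eq_one_left (hous.mul_Mratio_unit_segment hηC hφ hφη hs hs1), mul_comm]
  refine (tendsto_order.2 ⟨fun a ha => ?_, fun a ha => ?_⟩).congr' hcongr
  · have hlim : Tendsto (fun s : ℝ => (1 - s) * φ z + s) (𝓝[>] 0) (𝓝 (φ z)) :=
      ((by fun_prop : Continuous fun s : ℝ => (1 - s) * φ z + s).tendsto' 0 _ (by simp)).mono_left
        nhdsWithin_le_nhds
    filter_upwards [hlim.eventually (lt_mem_nhds ha), hIoc] with s hs_lt ⟨hs, hs1⟩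
    exact hs_lt.trans_le (hous.le_mul_Mratio_segment hηC hφ hφη z hs hs1)
  · obtain ⟨c, hφc, hca⟩ := exists_between ha
    obtain ⟨t, htz⟩ := hous.exists_smul_add_mem_of_apply_pos hsm hη hη0 hφ hφη
      (w := c • u - z) (by simpa [hφ.2] using hφc)
    have hlim : Tendsto (fun s : ℝ => max (s * t) ((1 - s) * c + s)) (𝓝[>] 0) (𝓝 c) :=
      ((by fun_prop : Continuous fun s : ℝ => max (s * t) ((1 - s) * c + s)).tendsto' 0 _
        (by simp; linarith)).mono_left nhdsWithin_le_nhds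
    filter_upwards [hlim.eventually (gt_mem_nhds hca), hIoc] with s hs_lt ⟨hs, hs1⟩
    exact (hous.mul_Mratio_segment_le hηC (by linarith) (by rwa [← add_sub_assoc] at htz)
      hs hs1).trans_lt hs_lt

/-- **Proposition** (horofunction limit). In an order unit space with a smooth
cone, `lim_{s→0⁺} M(z_s/y_s) M(u/y_s)⁻¹ = φ(z)` where `y_s = (1−s)η + su` and
`z_s = (1−s)z + su`. -/
theorem Mratio_quotient_tendsto_state
    (C : Set V) (u : V) (hous : IsOrderUnitSpace C u) (hsm : SmoothCone C u)
    (η : V) (hη : η ∈ frontier C) (hη0 : η ≠ 0)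
    (φ : V →ₗ[ℝ] ℝ) (hφ : IsState C u φ) (hφη : φ η = 0)
    (z : V) (hz : z ∈ C) (hφz : 0 < φ z) :
    Tendsto (fun s : ℝ =>
        Mratio C ((1 - s) • z + s • u) ((1 - s) • η + s • u) *
          (Mratio C u ((1 - s) • η + s • u))⁻¹)
      (𝓝[>] (0:ℝ)) (𝓝 (φ z)) :=
  Mratio_quotient_tendsto_state_general C u hous hsm η hη hη0 φ hφ hφη z hφz
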